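/- arXiv:2010.02145 — 2 statements merged into one kernel-verified Lean document; each statement's English description precedes it below -/
import Mathlib

section
/- Let G be the family of substructures N* ⊆ M of cardinality κ such that for some level-1 model N of the canonical tree S_K there is an isomorphism f : N → N* with M ⊨ φ_{N,λ,1}[⟨f(a*_α) : α < κ⟩]. Then any two members N*₁ ⊆ N*₂ of G satisfy N*₁ ≺_K N*₂. -/
/- Framework: abstract elementary classes over a first-order vocabulary `τ`,
the canonical tree of an a.e.c. and the (semantics of the) canonical formulas
`φ_{N,γ,n}` of Shelah–Villaveces. -/

open FirstOrder Cardinal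

universe u

/-- A bundled `τ`-structure. -/
structure BStr (τ : FirstOrder.Language.{u, u}) : Type (u + 1) where
  α : Type u
  str : τ.Structure α

attribute [instance] BStr.str

/-- The data of an abstract class of `τ`-structures: a class `K` of structures together
with a distinguished ("strong", `≺_K`) notion of embedding. -/
structure AECData (τ : FirstOrder.Language.{u, u}) : Type (u + 1) where
  K : Set (BStr τ)
  strong : ∀ {X Y : Type u} [τ.Structure X] [τ.Structure Y], (X ↪[τ] Y) → Prop

variable {τ : FirstOrder.Language.{u, u}}

/-- Bundle a substructure of (the carrier of) a bundled structure. -/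
def BStr.ofSub (M : BStr τ) (S : τ.Substructure M.α) : BStr τ :=
  ⟨S, inferInstance⟩

/-- The function `f` is (the underlying function of) a `τ`-embedding. -/
def IsEmbFun (τ : FirstOrder.Language.{u, u}) {X Y : Type u} (sX : τ.Structure X) (sY : τ.Structure Y)
    (f : X → Y) : Prop :=
  letI := sX; letI := sY
  ∃ e : X ↪[τ] Y, ⇑e = f

/-- The function `f` is (the underlying function of) a strong (`≺_K`-) embedding. -/
def IsStrongFun (A : AECData τ) {X Y : Type u} (sX : τ.Structure X) (sY : τ.Structure Y)
    (f : X → Y) : Prop :=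
  letI := sX; letI := sY
  ∃ e : X ↪[τ] Y, ⇑e = f ∧ A.strong e

/-- The axioms of an abstract elementary class with LST number `κ`
(together with the convention that all models have size `≥ κ`). -/
structure AECAxioms (A : AECData τ) (κ : Cardinal.{u}) : Prop where
  infinite_lst : ℵ₀ ≤ κ
  card_le : τ.card ≤ κ
  min_card : ∀ M ∈ A.K, κ ≤ #M.α
  iso_closed : ∀ M N : BStr τ, M ∈ A.K → (M.α ≃[τ] N.α) → N ∈ A.K
  strong_mem : ∀ (M N : BStr τ) (e : M.α ↪[τ] N.α), A.strong e → M ∈ A.K ∧ N ∈ A.K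
  strong_refl : ∀ M ∈ A.K, A.strong (Language.Embedding.refl τ M.α)
  strong_trans : ∀ (M N P : BStr τ) (f : M.α ↪[τ] N.α) (g : N.α ↪[τ] P.α),
    A.strong f → A.strong g → A.strong (g.comp f)
  strong_iso : ∀ (M M' N N' : BStr τ) (e₁ : M'.α ≃[τ] M.α) (f : M.α ↪[τ] N.α)
    (e₂ : N.α ≃[τ] N'.α), A.strong f → A.strong ((e₂.toEmbedding.comp f).comp e₁.toEmbedding)
  coherence : ∀ (M N P : BStr τ) (f : M.α ↪[τ] N.α) (g : N.α ↪[τ] P.α),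
    A.strong (g.comp f) → A.strong g → A.strong f
  union : ∀ (M : BStr τ) (ι : Type u), Nonempty ι → ∀ S : ι → τ.Substructure M.α,
    (∀ i j, ∃ k, S i ≤ S k ∧ S j ≤ S k) →
    (∀ i, M.ofSub (S i) ∈ A.K) →
    (∀ i j (h : S i ≤ S j), A.strong (Language.Substructure.inclusion h)) →
    (∀ x : M.α, ∃ i, x ∈ S i) →
    M ∈ A.K ∧ ∀ i, A.strong (S i).subtype
  lst : ∀ M ∈ A.K, ∀ s : Set M.α, #s ≤ κ →
    ∃ S : τ.Substructure M.α, s ⊆ ↑S ∧ #S = κ ∧ A.strong S.subtype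

/-- The universe `{a*_α : α < κ·n}` of a level-`n` model of the canonical tree:
we identify `a*_{κ·k+ζ}` with the pair `(k, ζ)`, where `B` is a set of size `κ`. -/
def Lev (B : Type u) (n : ℕ) : Type u := {p : ℕ × B // p.1 < n}

/-- The inclusion of the first `κ·m` canonical elements into the first `κ·n`. -/
def Lev.incl {B : Type u} {m n : ℕ} (h : m ≤ n) : Lev B m → Lev B n :=
  fun p => ⟨p.1, lt_of_lt_of_le p.2 h⟩

/-- Level `n` of the canonical tree `S_K`: structures on `{a*_α : α < κ·n}` lying in `K`
all of whose restrictions to initial segments `{a*_α : α < κ·m}` are strong submodels. -/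
def SNode (A : AECData τ) (B : Type u) (n : ℕ) : Set (τ.Structure (Lev B n)) :=
  fun N =>
    letI := N
    (⟨Lev B n, N⟩ : BStr τ) ∈ A.K ∧
      ∀ m, ∀ hm : m < n, ∃ S : τ.Substructure (Lev B n),
        (S : Set (Lev B n)) = Set.range (Lev.incl (le_of_lt hm)) ∧ A.strong S.subtype

/-- `N ⊆ N'` for canonical-tree models: the canonical inclusion is a `τ`-embedding. -/
def TreeSub {B : Type u} {m n : ℕ} (h : m ≤ n) (N : τ.Structure (Lev B m))
    (N' : τ.Structure (Lev B n)) : Prop :=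
  IsEmbFun τ N N' (Lev.incl h)

/-- `N ≺_K N'` for canonical-tree models: the canonical inclusion is a strong embedding. -/
def TreeStrong (A : AECData τ) {B : Type u} {m n : ℕ} (h : m ≤ n) (N : τ.Structure (Lev B m))
    (N' : τ.Structure (Lev B n)) : Prop :=
  IsStrongFun A N N' (Lev.incl h)

/-- Satisfaction in `M` of the canonical formulas: `SatF A B M γ n N f` says that
`M ⊨ φ_{N,γ,n+1}[⟨f(a*_α) : α < κ·(n+1)⟩]`, for `N` a structure at level `n+1`.
Defined by recursion on `γ`: at `0` it is satisfaction of the atomic diagram of `N`;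
at limits, the conjunction of the earlier stages; at `β+1` it says that every `κ`-tuple
`z` of `M` is covered by an extension of `f` to a copy of some `N' ∈ S_{n+2}` strongly
extending `N` and satisfying the stage-`β` formula. -/
noncomputable def SatF (A : AECData τ) (B : Type u) (M : BStr τ) (γ : Ordinal.{u}) :
    ∀ n : ℕ, τ.Structure (Lev B (n + 1)) → (Lev B (n + 1) → M.α) → Prop :=
  Ordinal.limitRecOn
    (motive := fun _ => ∀ n : ℕ, τ.Structure (Lev B (n + 1)) → (Lev B (n + 1) → M.α) → Prop) γ
    (fun _n N f => IsEmbFun τ N M.str f)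
    (fun _β ih n N f =>
      ∀ z : B → M.α, ∃ N' : τ.Structure (Lev B (n + 2)),
        N' ∈ SNode A B (n + 2) ∧ TreeStrong A (Nat.le_succ _) N N' ∧
        ∃ g : Lev B (n + 2) → M.α, g ∘ Lev.incl (Nat.le_succ _) = f ∧
          ih (n + 1) N' g ∧ ∀ b : B, ∃ p, z b = g p)
    (fun _γ' _ ih n N f => ∀ β, ∀ hβ : β < _γ', ih β hβ n N f)

/-- Satisfaction in `M` of the canonical sentences `φ_{γ,0}`. -/
noncomputable def Sat0 (A : AECData τ) (B : Type u) (M : BStr τ) (γ : Ordinal.{u}) : Prop :=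
  Ordinal.limitRecOn (motive := fun _ => Prop) γ
    True
    (fun β _ =>
      ∀ z : B → M.α, ∃ N' : τ.Structure (Lev B 1), N' ∈ SNode A B 1 ∧
        ∃ g : Lev B 1 → M.α, SatF A B M β 0 N' g ∧ ∀ b : B, ∃ p, z b = g p)
    (fun _γ' _ ih => ∀ β, ∀ hβ : β < _γ', ih β hβ)

variable {τ : FirstOrder.Language.{u, u}}

/-- The family `G` of κ-sized substructures `N* ⊆ M` which are images of some level-1
canonical-tree model `N` under an isomorphism `f` with `M ⊨ φ_{N,γ,1}[⟨f(a*_α) : α<κ⟩]`. -/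
def CanonG (A : AECData τ) (B : Type u) (κ : Cardinal.{u}) (M : BStr τ)
    (γ : Ordinal.{u}) : Set (τ.Substructure M.α) :=
  {S | #S = κ ∧ ∃ N ∈ SNode A B 1, ∃ f : Lev B 1 → M.α,
      IsEmbFun τ N M.str f ∧ Set.range f = (S : Set M.α) ∧ SatF A B M γ 0 N f}

/-!
Let `fᵢ : Nᵢ → M` witness `N*ᵢ ∈ G` and let `u : N₁ → N₂` be the embedding with `f₂ ∘ u = f₁`.
Call a *rung* at level `k` a triple `(N, P, u)` of structures on the level-`k` universe of the
canonical tree with a map `u : N → P`; it is realized at stage `β` if there are `g, h` into `M`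
with `h ∘ u = g` satisfying the stage-`β` canonical formulas of `N` and `P`. Realization at
`β + 2` lets us extend `g` to a copy of some `N' ∈ S_K` whose image covers that of `h`, and then
`h` to a copy of some `P'` whose image covers that of `N'`; this produces embeddings
`v : P → N'` and `u' : N' → P'` such that `v ∘ u` and `u' ∘ v` are the strong tree inclusions.
There are at most `2^κ < cf λ` rungs at each level, so a rung realized at all stages below `λ`
has a successor rung with the same property (pigeonhole on the stages where each candidate
fails). Iterating gives a ladder `N₀ → P₀ → N₁ → P₁ → ⋯` whose zig-zag composites are strong.
The `Nₖ` and the `Pₖ` have the same direct limit `U`, so the union axiom gives `N₀ ≺_K U` and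
`P₀ ≺_K U`, whence `u₀ : N₀ → P₀` is strong by coherence; transporting along `f₁, f₂` gives
`N*₁ ≺_K N*₂`.
-/

open Language

section EmbeddingFunctions

variable {X Y Z : Type u} {sX : τ.Structure X} {sY : τ.Structure Y} {sZ : τ.Structure Z}

theorem IsEmbFun.injective {f : X → Y} (hf : IsEmbFun τ sX sY f) : Function.Injective f := by
  obtain ⟨e, rfl⟩ := hf
  exact @Embedding.injective τ X Y sX sY e

theorem IsEmbFun.comp {g : Y → Z} {f : X → Y} (hg : IsEmbFun τ sY sZ g) (hf : IsEmbFun τ sX sY f) :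
    IsEmbFun τ sX sZ (g ∘ f) := by
  let := sX; let := sY; let := sZ
  obtain ⟨g, rfl⟩ := hg
  obtain ⟨f, rfl⟩ := hf
  exact ⟨g.comp f, rfl⟩

theorem IsEmbFun.of_comp {h : Y → Z} {g : X → Z} {u : X → Y} (hh : IsEmbFun τ sY sZ h)
    (hg : IsEmbFun τ sX sZ g) (hcomm : h ∘ u = g) : IsEmbFun τ sX sY u := by
  let := sX; let := sY; let := sZ
  obtain ⟨h, rfl⟩ := hh
  obtain ⟨g, rfl⟩ := hg
  refine ⟨⟨⟨u, fun a b hab => g.injective ?_⟩, fun {n} f x => h.injective ?_, fun {n} r x => ?_⟩,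
    rfl⟩
  · rw [← hcomm, Function.comp_apply, hab, Function.comp_apply]
  · show h (u (Structure.funMap f x)) = h (Structure.funMap f (u ∘ x))
    rw [h.map_fun, ← Function.comp_assoc, hcomm, ← g.map_fun]
    exact congrFun hcomm _
  · rw [← h.map_rel, ← Function.comp_assoc, hcomm, g.map_rel]

theorem IsEmbFun.exists_comp_eq {g : X → Z} {h : Y → Z} (hg : IsEmbFun τ sX sZ g)
    (hh : IsEmbFun τ sY sZ h) (hr : Set.range g ⊆ Set.range h) :
    ∃ u : X → Y, IsEmbFun τ sX sY u ∧ h ∘ u = g := by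
  choose u hu using fun x => hr ⟨x, rfl⟩
  exact ⟨u, hh.of_comp hg (funext hu), funext hu⟩

theorem IsStrongFun.isEmbFun {A : AECData τ} {f : X → Y} (hf : IsStrongFun A sX sY f) :
    IsEmbFun τ sX sY f := by
  obtain ⟨e, he, -⟩ := hf
  exact ⟨e, he⟩

theorem isStrongFun_coe_iff (A : AECData τ) (e : @Embedding τ X Y sX sY) :
    IsStrongFun A sX sY e ↔ A.strong e :=
  ⟨fun ⟨_, he, hs⟩ => DFunLike.coe_injective he ▸ hs, fun hs => ⟨e, rfl, hs⟩⟩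

end EmbeddingFunctions

theorem exists_limit_of_nat_chain (X : ℕ → BStr τ) (t : ∀ n, (X n).α ↪[τ] (X (n + 1)).α) :
    ∃ (Z : BStr τ) (e : ∀ n, (X n).α ↪[τ] Z.α),
      (∀ n x, e (n + 1) (t n x) = e n x) ∧ ∀ z, ∃ n x, e n x = z := by
  let G : ULift.{u} ℕ → Type u := fun i => (X i.down).α
  let f : ∀ i j : ULift.{u} ℕ, i ≤ j → G i ↪[τ] G j := fun i j h =>
    DirectedSystem.natLERec (G' := fun n => (X n).α) t i.down j.down h
  have hsys := DirectedSystem.natLERec.directedSystem (G' := fun n => (X n).α) t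
  have : DirectedSystem G fun i j h => f i j h :=
    ⟨fun i x => hsys.map_self x, fun _ _ _ hij hjk x => hsys.map_map hij hjk x⟩
  refine ⟨⟨Language.DirectLimit G f, inferInstance⟩, fun n => DirectLimit.of τ _ G f ⟨n⟩,
    fun n x => ?_, fun z => ?_⟩
  · refine (congrArg _ ?_).trans
      (DirectLimit.of_f (f := f) (hij := (Nat.le_succ n : (⟨n⟩ : ULift.{u} ℕ) ≤ ⟨n + 1⟩)))
    simp [f, Nat.leRecOn_succ, Nat.leRecOn_self]
  · obtain ⟨i, x, hx⟩ := DirectLimit.exists_of z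
    exact ⟨i.down, x, hx⟩

namespace AECAxioms

variable {A : AECData τ} {κ : Cardinal.{u}}

theorem strong_inclusion_of_comp (hA : AECAxioms A κ) {X Y Z : BStr τ}
    {S T : τ.Substructure Z.α} (hST : S ≤ T) (ex : X.α ↪[τ] Z.α) (ey : Y.α ↪[τ] Z.α)
    (hS : Set.range ex = S) (hT : Set.range ey = T) (e : X.α ↪[τ] Y.α) (he : A.strong e)
    (hcomm : ∀ x, ey (e x) = ex x) : A.strong (Substructure.inclusion hST) := by
  obtain rfl : ex.toHom.range = S := SetLike.ext' (by rw [Hom.range_coe, Embedding.coe_toHom, hS])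
  obtain rfl : ey.toHom.range = T := SetLike.ext' (by rw [Hom.range_coe, Embedding.coe_toHom, hT])
  have hincl : (ey.equivRange.toEmbedding.comp e).comp ex.equivRange.symm.toEmbedding =
      Substructure.inclusion hST := by
    ext s
    obtain ⟨x, rfl⟩ := ex.equivRange.surjective s
    simp [hcomm]
  rw [← hincl]
  exact hA.strong_iso X (Z.ofSub _) Y (Z.ofSub _) ex.equivRange.symm e ey.equivRange he

theorem strong_inclusion_of_isStrongFun (hA : AECAxioms A κ) {Z : BStr τ} {X Y : Type u}
    {sX : τ.Structure X} {sY : τ.Structure Y} {S T : τ.Substructure Z.α} (hST : S ≤ T)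
    {f : X → Z.α} {g : Y → Z.α} {u : X → Y} (hf : IsEmbFun τ sX Z.str f)
    (hg : IsEmbFun τ sY Z.str g) (hS : Set.range f = S) (hT : Set.range g = T)
    (hu : IsStrongFun A sX sY u) (hcomm : g ∘ u = f) : A.strong (Substructure.inclusion hST) := by
  obtain ⟨f, rfl⟩ := hf
  obtain ⟨g, rfl⟩ := hg
  obtain ⟨u, rfl, hu⟩ := hu
  exact hA.strong_inclusion_of_comp (X := ⟨X, sX⟩) (Y := ⟨Y, sY⟩) hST f g hS hT u hu
    (congrFun hcomm)

theorem strong_of_strong_subtype_range (hA : AECAxioms A κ) {X Z : BStr τ} (e : X.α ↪[τ] Z.α)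
    (h : A.strong e.toHom.range.subtype) : A.strong e :=
  hA.strong_iso (Z.ofSub _) X Z Z e.equivRange _ (Language.Equiv.refl τ Z.α) h

theorem strong_subtype_of_chain (hA : AECAxioms A κ) (Z : BStr τ) (R : ℕ → τ.Substructure Z.α)
    (hmono : Monotone R) (hstep : ∀ n, A.strong (Substructure.inclusion (hmono (Nat.le_succ n))))
    (hcover : ∀ z, ∃ n, z ∈ R n) (n : ℕ) : A.strong (R n).subtype := by
  have hK : ∀ n, Z.ofSub (R n) ∈ A.K := fun n =>
    (hA.strong_mem (Z.ofSub (R n)) (Z.ofSub (R (n + 1))) _ (hstep n)).1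
  have hle : ∀ m n (hmn : m ≤ n), A.strong (Substructure.inclusion (hmono hmn)) := by
    intro m n hmn
    induction n, hmn using Nat.le_induction with
    | base =>
      rw [Substructure.inclusion_self]
      exact hA.strong_refl (Z.ofSub (R m)) (hK m)
    | succ n _ ih =>
      exact hA.strong_trans (Z.ofSub (R m)) (Z.ofSub (R n)) (Z.ofSub (R (n + 1))) _ _ ih (hstep n)
  -- a backwards inclusion is strong by coherence over a common upper bound
  have hall : ∀ i j (h : R i ≤ R j), A.strong (Substructure.inclusion h) := fun i j h =>
    hA.coherence (Z.ofSub (R i)) (Z.ofSub (R j)) (Z.ofSub (R (max i j))) (Substructure.inclusion h)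
      (Substructure.inclusion (hmono (le_max_right i j)))
      (hle i _ (le_max_left i j)) (hle j _ (le_max_right i j))
  refine (hA.union Z (ULift ℕ) ⟨⟨0⟩⟩ (fun i => R i.down) (fun i j => ?_) (fun i => hK _)
    (fun i j h => hall _ _ h) (fun z => ?_)).2 ⟨n⟩
  · exact ⟨⟨max i.down j.down⟩, hmono (le_max_left _ _), hmono (le_max_right _ _)⟩
  · obtain ⟨n, hn⟩ := hcover z
    exact ⟨⟨n⟩, hn⟩

theorem strong_of_chain (hA : AECAxioms A κ) (Z : BStr τ) (X : ℕ → BStr τ)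
    (e : ∀ n, (X n).α ↪[τ] Z.α) (t : ∀ n, (X n).α ↪[τ] (X (n + 1)).α) (ht : ∀ n, A.strong (t n))
    (hcomm : ∀ n x, e (n + 1) (t n x) = e n x) (hcover : ∀ z, ∃ n x, e n x = z) (n : ℕ) :
    A.strong (e n) := by
  have hmono : Monotone fun n => (e n).toHom.range := monotone_nat_of_le_succ fun n z hz => by
    obtain ⟨x, rfl⟩ := Hom.mem_range.1 hz
    exact Hom.mem_range.2 ⟨t n x, hcomm n x⟩
  have hrange : ∀ n, Set.range (e n) = (e n).toHom.range := fun n => by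
    rw [Hom.range_coe, Embedding.coe_toHom]
  refine hA.strong_of_strong_subtype_range (e n) (hA.strong_subtype_of_chain Z _ hmono
    (fun n => hA.strong_inclusion_of_comp _ (e n) (e (n + 1)) (hrange n) (hrange (n + 1)) (t n)
      (ht n) (hcomm n)) (fun z => ?_) n)
  obtain ⟨n, x, rfl⟩ := hcover z
  exact ⟨n, Hom.mem_range.2 ⟨x, rfl⟩⟩

theorem strong_of_ladder (hA : AECAxioms A κ)
    (N P : ℕ → BStr τ) (u : ∀ n, (N n).α ↪[τ] (P n).α) (v : ∀ n, (P n).α ↪[τ] (N (n + 1)).α)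
    (hvu : ∀ n, A.strong ((v n).comp (u n))) (huv : ∀ n, A.strong ((u (n + 1)).comp (v n))) :
    A.strong (u 0) := by
  obtain ⟨Z, e, hcomm, hcover⟩ := exists_limit_of_nat_chain N fun n => (v n).comp (u n)
  have heN := hA.strong_of_chain Z N e _ hvu hcomm hcover 0
  have hcoverP : ∀ z, ∃ n x, e (n + 1) (v n x) = z := fun z => by
    obtain ⟨n, x, rfl⟩ := hcover z
    exact ⟨n, u n x, hcomm n x⟩
  have heP := hA.strong_of_chain Z P (fun n => (e (n + 1)).comp (v n)) _ huv
    (fun n x => hcomm (n + 1) (v n x)) hcoverP 0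
  refine hA.coherence (N 0) (P 0) Z (u 0) _ ?_ heP
  convert heN using 1
  ext x
  exact hcomm 0 x

end AECAxioms

theorem exists_seq_of_forall_exists {α : ℕ → Type*} {p : ∀ k, α k → Prop}
    {r : ∀ k, α k → α (k + 1) → Prop} {x₀ : α 0} (h₀ : p 0 x₀)
    (step : ∀ k x, p k x → ∃ y, r k x y ∧ p (k + 1) y) :
    ∃ x : ∀ k, α k, x 0 = x₀ ∧ ∀ k, p k (x k) ∧ r k (x k) (x (k + 1)) := by
  choose next hnext using step
  let x : ∀ k, {a : α k // p k a} := fun k =>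
    Nat.rec ⟨x₀, h₀⟩ (fun k a => ⟨next k a.1 a.2, (hnext k a.1 a.2).2⟩) k
  exact ⟨fun k => (x k).1, rfl, fun k => ⟨(x k).2, (hnext k _ (x k).2).1⟩⟩

theorem Ordinal.exists_forall_lt_of_forall_lt_exists {Y : Type u} {Λ : Ordinal.{u}}
    (hY : #Y < Λ.cof) {p : Y → Ordinal.{u} → Prop} (hp : ∀ y, Antitone (p y))
    (h : ∀ δ < Λ, ∃ y, p y δ) : ∃ y, ∀ δ < Λ, p y δ := by
  by_contra! hne
  choose δ hδΛ hδ using hne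
  obtain ⟨y, hy⟩ := h _ (Ordinal.iSup_lt_of_lt_cof hY hδΛ)
  exact hδ y (hp y (Ordinal.le_iSup δ y) hy)

theorem mk_structure_le {X : Type u} {κ : Cardinal.{u}} (hκ : ℵ₀ ≤ κ) (hτ : τ.card ≤ κ)
    (hX : #X ≤ κ) : #(τ.Structure X) ≤ 2 ^ κ := by
  -- a structure is determined by the atomic formulas with parameters that it satisfies
  let diagram : τ.Structure X → Set (τ.Formula X) := fun S =>
    {φ | @Formula.Realize τ X S X φ id}
  have hinj : Function.Injective diagram := by
    intro S₁ S₂ hS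
    have hmem : ∀ φ, @Formula.Realize τ X S₁ X φ id ↔ @Formula.Realize τ X S₂ X φ id :=
      fun φ => Set.ext_iff.1 hS φ
    refine Structure.ext (funext fun n => funext fun F => funext fun x => ?_)
      (funext fun n => funext fun R => funext fun x => propext ?_)
    · have h := (hmem ((func F fun i => var (x i)).equal (var (@Structure.funMap τ X S₁ n F x)))).1
        (by simp)
      simp only [Formula.realize_equal, Term.realize_func, Term.realize_var, id] at h
      exact h.symm
    · simpa only [Formula.realize_rel, Term.realize_var, id] using
        hmem (R.formula fun i => var (x i))
  have hformula : #(τ.Formula X) ≤ κ := by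
    refine (mk_le_of_injective (f := fun φ : τ.Formula X => (⟨0, φ⟩ : Σ n, τ.BoundedFormula X n))
      fun _ _ h => eq_of_heq (Sigma.mk.inj h).2).trans (BoundedFormula.card_le.trans ?_)
    simpa using ⟨hκ, add_le_of_le hκ hX hτ⟩
  calc #(τ.Structure X) ≤ #(Set (τ.Formula X)) := mk_le_of_injective hinj
    _ = 2 ^ #(τ.Formula X) := mk_set
    _ ≤ 2 ^ κ := power_le_power_left two_ne_zero hformula

section Satisfaction

variable {A : AECData τ} {B : Type u} {M : BStr τ} {n : ℕ} {N : τ.Structure (Lev B (n + 1))}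
  {f : Lev B (n + 1) → M.α}

theorem satF_zero : SatF A B M 0 n N f ↔ IsEmbFun τ N M.str f := by
  rw [SatF, Ordinal.limitRecOn_zero]

theorem satF_add_one {β : Ordinal.{u}} :
    SatF A B M (β + 1) n N f ↔
      ∀ z : B → M.α, ∃ N' : τ.Structure (Lev B (n + 2)),
        N' ∈ SNode A B (n + 2) ∧ TreeStrong A (Nat.le_succ _) N N' ∧
        ∃ g : Lev B (n + 2) → M.α, g ∘ Lev.incl (Nat.le_succ _) = f ∧
          SatF A B M β (n + 1) N' g ∧ ∀ b : B, ∃ p, z b = g p := by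
  rw [SatF, Ordinal.limitRecOn_add_one]
  rfl

theorem satF_limit {γ : Ordinal.{u}} (hγ : Order.IsSuccLimit γ) :
    SatF A B M γ n N f ↔ ∀ β < γ, SatF A B M β n N f := by
  rw [SatF, Ordinal.limitRecOn_limit _ _ _ _ hγ]
  rfl

theorem satF_of_add_one {β : Ordinal.{u}} (h : SatF A B M (β + 1) n N f) :
    SatF A B M β n N f := by
  induction β using Ordinal.limitRecOn generalizing n with
  | zero =>
    obtain ⟨N', -, hNN', g, rfl, hg, -⟩ := satF_add_one.1 h fun b => f ⟨(0, b), n.succ_pos⟩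
    exact satF_zero.2 ((satF_zero.1 hg).comp hNN'.isEmbFun)
  | add_one β ih =>
    refine satF_add_one.2 fun z => ?_
    obtain ⟨N', hN', hNN', g, hgf, hg, hz⟩ := satF_add_one.1 h z
    exact ⟨N', hN', hNN', g, hgf, ih hg, hz⟩
  | limit β hβ ih =>
    refine (satF_limit hβ).2 fun δ hδ => ih δ hδ (satF_add_one.2 fun z => ?_)
    obtain ⟨N', hN', hNN', g, hgf, hg, hz⟩ := satF_add_one.1 h z
    exact ⟨N', hN', hNN', g, hgf, (satF_limit hβ).1 hg δ hδ, hz⟩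

theorem satF_of_le {β γ : Ordinal.{u}} (hγβ : γ ≤ β) (h : SatF A B M β n N f) :
    SatF A B M γ n N f := by
  induction β using Ordinal.limitRecOn with
  | zero => rwa [nonpos_iff_eq_zero.1 hγβ]
  | add_one β ih =>
    rcases Order.le_succ_iff_eq_or_le.1 hγβ with rfl | hγβ
    · exact h
    · exact ih hγβ (satF_of_add_one h)
  | limit β hβ ih =>
    rcases hγβ.eq_or_lt with rfl | hγβ
    · exact h
    · exact (satF_limit hβ).1 h γ hγβ

theorem isEmbFun_of_satF {β : Ordinal.{u}} (h : SatF A B M β n N f) : IsEmbFun τ N M.str f :=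
  satF_zero.1 (satF_of_le zero_le h)

end Satisfaction

theorem Lev.mk_le {B : Type u} (hB : ℵ₀ ≤ #B) (n : ℕ) : #(Lev B n) ≤ #B := by
  refine (mk_subtype_le _).trans (le_of_eq ?_)
  simpa using aleph0_mul_eq hB

theorem Lev.exists_surjective {B : Type u} (hB : ℵ₀ ≤ #B) (n : ℕ) :
    ∃ s : B → Lev B (n + 1), Function.Surjective s := by
  obtain ⟨i⟩ := (le_def _ _).1 (Lev.mk_le hB (n + 1))
  have : Nonempty B := mk_ne_zero_iff.1 (aleph0_pos.trans_le hB).ne'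
  have : Nonempty (Lev B (n + 1)) := ⟨⟨(0, Classical.arbitrary B), n.succ_pos⟩⟩
  exact ⟨Function.invFun i, Function.invFun_surjective i.injective⟩

theorem exists_extension_of_satF_add_one {A : AECData τ} {B : Type u} {M : BStr τ} {n : ℕ}
    {N : τ.Structure (Lev B (n + 1))} {f : Lev B (n + 1) → M.α} {β : Ordinal.{u}}
    (hB : ℵ₀ ≤ #B) (h : SatF A B M (β + 1) n N f) {m : ℕ} (w : Lev B (m + 1) → M.α) :
    ∃ N' : τ.Structure (Lev B (n + 2)), TreeStrong A (Nat.le_succ _) N N' ∧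
      ∃ g : Lev B (n + 2) → M.α, g ∘ Lev.incl (Nat.le_succ _) = f ∧
        SatF A B M β (n + 1) N' g ∧ Set.range w ⊆ Set.range g := by
  obtain ⟨s, hs⟩ := Lev.exists_surjective hB m
  obtain ⟨N', -, hNN', g, hgf, hg, hcover⟩ := satF_add_one.1 h (w ∘ s)
  refine ⟨N', hNN', g, hgf, hg, ?_⟩
  rintro _ ⟨p, rfl⟩
  obtain ⟨b, rfl⟩ := hs p
  obtain ⟨q, hq⟩ := hcover b
  exact ⟨q, hq.symm⟩

structure Rung (τ : FirstOrder.Language.{u, u}) (B : Type u) (k : ℕ) : Type u where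
  N : τ.Structure (Lev B (k + 1))
  P : τ.Structure (Lev B (k + 1))
  u : Lev B (k + 1) → Lev B (k + 1)

namespace Rung

variable {A : AECData τ} {B : Type u} {M : BStr τ} {k : ℕ}

theorem mk_le (hB : ℵ₀ ≤ #B) (hτ : τ.card ≤ #B) : #(Rung τ B k) ≤ 2 ^ #B := by
  have hlev := Lev.mk_le hB (k + 1)
  have hstr := mk_structure_le hB hτ hlev
  have hfun : #(Lev B (k + 1) → Lev B (k + 1)) ≤ 2 ^ #B :=
    calc #(Lev B (k + 1) → Lev B (k + 1)) = #(Lev B (k + 1)) ^ #(Lev B (k + 1)) :=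
          (power_def _ _).symm
      _ ≤ #B ^ #B := (power_le_power_right hlev).trans
          (power_le_power_left (aleph0_pos.trans_le hB).ne' hlev)
      _ = 2 ^ #B := power_self_eq hB
  have h2 : ℵ₀ ≤ 2 ^ #B := hB.trans (cantor _).le
  calc #(Rung τ B k)
      ≤ #(τ.Structure (Lev B (k + 1)) × τ.Structure (Lev B (k + 1)) ×
          (Lev B (k + 1) → Lev B (k + 1))) :=
        mk_le_of_injective (f := fun X => (X.N, X.P, X.u)) fun X Y h => by
          cases X; cases Y; simp_all
    _ ≤ 2 ^ #B * (2 ^ #B * 2 ^ #B) := by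
        simp only [mk_prod, lift_id]
        gcongr
    _ = 2 ^ #B := by rw [mul_eq_self h2, mul_eq_self h2]

def RealizedAt (A : AECData τ) (M : BStr τ) (X : Rung τ B k) (β : Ordinal.{u}) : Prop :=
  ∃ g h : Lev B (k + 1) → M.α, h ∘ X.u = g ∧ SatF A B M β k X.N g ∧ SatF A B M β k X.P h

def LadderStep (A : AECData τ) (X : Rung τ B k) (Y : Rung τ B (k + 1)) : Prop :=
  ∃ v : Lev B (k + 1) → Lev B (k + 2), IsEmbFun τ X.P Y.N v ∧
    IsStrongFun A X.N Y.N (v ∘ X.u) ∧ IsStrongFun A X.P Y.P (Y.u ∘ v)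

theorem realizedAt_antitone (X : Rung τ B k) : Antitone (X.RealizedAt A M) :=
  fun _ _ hγβ ⟨g, h, hhu, hg, hh⟩ => ⟨g, h, hhu, satF_of_le hγβ hg, satF_of_le hγβ hh⟩

theorem RealizedAt.isEmbFun {X : Rung τ B k} {β : Ordinal.{u}} (hX : X.RealizedAt A M β) :
    IsEmbFun τ X.N X.P X.u :=
  let ⟨_, _, hhu, hg, hh⟩ := hX
  (isEmbFun_of_satF hh).of_comp (isEmbFun_of_satF hg) hhu

theorem RealizedAt.exists_ladderStep (hB : ℵ₀ ≤ #B) {X : Rung τ B k} {δ : Ordinal.{u}}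
    (hX : X.RealizedAt A M (δ + 1 + 1)) :
    ∃ Y : Rung τ B (k + 1), X.LadderStep A Y ∧ Y.RealizedAt A M δ := by
  obtain ⟨g, h, hhu, hg, hh⟩ := hX
  obtain ⟨N', hNN', g', hg'g, hg', hhg'⟩ := exists_extension_of_satF_add_one hB hg h
  obtain ⟨P', hPP', h', hh'h, hh', hg'h'⟩ :=
    exists_extension_of_satF_add_one hB (satF_of_add_one hh) g'
  obtain ⟨v, hv, hg'v⟩ := (isEmbFun_of_satF hh).exists_comp_eq (isEmbFun_of_satF hg') hhg'
  obtain ⟨u', -, hh'u'⟩ := (isEmbFun_of_satF hg').exists_comp_eq (isEmbFun_of_satF hh') hg'h'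
  refine ⟨⟨N', P', u'⟩, ⟨v, hv, ?_, ?_⟩, g', h', hh'u', satF_of_add_one hg', hh'⟩
  · have hvu : v ∘ X.u = Lev.incl (Nat.le_succ _) := (isEmbFun_of_satF hg').injective.comp_left
      (by simp only [← Function.comp_assoc, hg'v, hhu, hg'g])
    rw [hvu]
    exact hNN'
  · have hu'v : u' ∘ v = Lev.incl (Nat.le_succ _) := (isEmbFun_of_satF hh').injective.comp_left
      (by simp only [← Function.comp_assoc, hh'u', hg'v, hh'h])
    rw [hu'v]
    exact hPP'

theorem exists_ladderStep_of_realizedAt_lt (hB : ℵ₀ ≤ #B) {Λ : Ordinal.{u}}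
    (hΛ : Order.IsSuccLimit Λ) (hcard : #(Rung τ B (k + 1)) < Λ.cof) {X : Rung τ B k}
    (hX : ∀ β < Λ, X.RealizedAt A M β) :
    ∃ Y : Rung τ B (k + 1), X.LadderStep A Y ∧ ∀ β < Λ, Y.RealizedAt A M β := by
  obtain ⟨Y, hY⟩ := Ordinal.exists_forall_lt_of_forall_lt_exists hcard
    (p := fun Y δ => X.LadderStep A Y ∧ Y.RealizedAt A M δ)
    (fun Y _ _ hγβ hY => ⟨hY.1, Y.realizedAt_antitone hγβ hY.2⟩)
    (fun δ hδ => (hX _ (hΛ.add_one_lt (hΛ.add_one_lt hδ))).exists_ladderStep hB)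
  exact ⟨Y, (hY 0 hΛ.pos).1, fun β hβ => (hY β hβ).2⟩

theorem isStrongFun_u_of_ladder {A : AECData τ} {κ : Cardinal.{u}} (hA : AECAxioms A κ)
    (R : ∀ k, Rung τ B k) (hR : ∀ k, (R k).LadderStep A (R (k + 1)))
    (hu : ∀ k, IsEmbFun τ (R k).N (R k).P (R k).u) : IsStrongFun A (R 0).N (R 0).P (R 0).u := by
  choose u hu using hu
  choose v hv hvu huv using hR
  choose v hv' using hv
  rw [← hu 0, isStrongFun_coe_iff]
  refine hA.strong_of_ladder (fun k => ⟨_, (R k).N⟩) (fun k => ⟨_, (R k).P⟩) u v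
    (fun k => (isStrongFun_coe_iff A _).1 ?_) (fun k => (isStrongFun_coe_iff A _).1 ?_)
  · show IsStrongFun A _ _ (v k ∘ u k)
    rw [hv' k, hu k]
    exact hvu k
  · show IsStrongFun A _ _ (u (k + 1) ∘ v k)
    rw [hv' k, hu (k + 1)]
    exact huv k

end Rung

/-- any two members `N*₁ ⊆ N*₂` of the family `G` (with `γ = λ = ℶ₂(κ)⁺⁺`)
satisfy `N*₁ ≺_K N*₂`. -/
theorem canonG_coherent (A : AECData τ) (κ : Cardinal.{u}) (hA : AECAxioms A κ)
    (B : Type u) (hB : #B = κ) (M : BStr τ)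
    (S₁ S₂ : τ.Substructure M.α)
    (hS₁ : S₁ ∈ CanonG A B κ M (Order.succ (Order.succ ((2 : Cardinal.{u}) ^ (2 : Cardinal.{u}) ^ κ))).ord)
    (hS₂ : S₂ ∈ CanonG A B κ M (Order.succ (Order.succ ((2 : Cardinal.{u}) ^ (2 : Cardinal.{u}) ^ κ))).ord)
    (h : S₁ ≤ S₂) :
    A.strong (Language.Substructure.inclusion h) := by
  obtain ⟨-, N₁, -, f₁, hf₁, hS₁, hsat₁⟩ := hS₁
  obtain ⟨-, N₂, -, f₂, hf₂, hS₂, hsat₂⟩ := hS₂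
  have hκ : ℵ₀ ≤ #B := hB ▸ hA.infinite_lst
  have hμ : ℵ₀ ≤ Order.succ ((2 : Cardinal.{u}) ^ (2 : Cardinal.{u}) ^ κ) :=
    hA.infinite_lst.trans ((cantor _).le.trans ((cantor _).le.trans (Order.le_succ _)))
  set Λ := (Order.succ (Order.succ ((2 : Cardinal.{u}) ^ (2 : Cardinal.{u}) ^ κ))).ord
  have hΛ : Order.IsSuccLimit Λ := isSuccLimit_ord (hμ.trans (Order.le_succ _))
  have hcard (k : ℕ) : #(Rung τ B k) < Λ.cof := by
    rw [(isRegular_succ hμ).cof_ord]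
    calc #(Rung τ B k) ≤ 2 ^ κ := hB ▸ Rung.mk_le hκ (hB ▸ hA.card_le)
      _ < 2 ^ 2 ^ κ := cantor _
      _ < _ := (Order.lt_succ _).trans (Order.lt_succ _)
  obtain ⟨u, -, hu⟩ := hf₁.exists_comp_eq hf₂ (by rw [hS₁, hS₂]; exact h)
  have hX₀ : ∀ β < Λ, (⟨N₁, N₂, u⟩ : Rung τ B 0).RealizedAt A M β := fun β hβ =>
    ⟨f₁, f₂, hu, (satF_limit hΛ).1 hsat₁ β hβ, (satF_limit hΛ).1 hsat₂ β hβ⟩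
  obtain ⟨R, hR₀, hR⟩ := exists_seq_of_forall_exists (α := Rung τ B)
    (p := fun _ X => ∀ β < Λ, X.RealizedAt A M β) (r := fun _ X Y => X.LadderStep A Y) hX₀
    fun _ _ hX => Rung.exists_ladderStep_of_realizedAt_lt hκ hΛ (hcard _) hX
  have hu₀ := Rung.isStrongFun_u_of_ladder hA R (fun k => (hR k).2)
    (fun k => ((hR k).1 0 hΛ.pos).isEmbFun)
  rw [hR₀] at hu₀
  exact hA.strong_inclusion_of_isStrongFun h hf₁ hf₂ hS₁ hS₂ hu₀ hu
end

section
/- (Komjáth–Shelah partition theorem on well-founded trees.) Let α be an ordinal and μ a cardinal; set ν = (|α|^(μ^ℵ₀))⁺. For any colouring F : ds(ν⁺) → μ of the tree of strictly decreasing sequences of ordinals below ν⁺, there exist an embedding φ : ds(α) → ds(ν⁺) of trees and a function c : ω → μ such that for every η ∈ ds(α) of length n+1, F(φ(η)) = c(n). -/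
open Cardinal

universe u

/-- `ds β`: the tree of finite strictly decreasing sequences of ordinals `< β`,
ordered by end-extension (i.e. by `List.IsPrefix`). -/
def ds (β : Ordinal.{u}) : Type (u + 1) :=
  {l : List Ordinal.{u} // l.Chain' (· > ·) ∧ ∀ x ∈ l, x < β}

namespace KS

/-- the minimum (= last entry) of a stem; `β` for the empty stem -/
def minS {β : Ordinal.{u}} (s : ds β) : Ordinal.{u} := s.1.getLast?.getD β

def dsNil (β : Ordinal.{u}) : ds β := ⟨[], by simp [List.Chain'], by simp⟩

lemma ds_pairwise {β : Ordinal.{u}} (s : ds β) : s.1.Pairwise (· > ·) :=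
  List.isChain_iff_pairwise.mp s.2.1

lemma minL_spec {β : Ordinal.{u}} {l : List Ordinal.{u}} (hp : l.Pairwise (· > ·))
    {ξ : Ordinal.{u}} (h : ξ < l.getLast?.getD β) : ∀ a ∈ l, ξ < a := by
  induction l with
  | nil => simp
  | cons a t ih =>
    rcases t with _ | ⟨b, t'⟩
    · simpa using h
    · have hp' : (b :: t').Pairwise (· > ·) := hp.tail
      have h' : ξ < (b :: t').getLast?.getD β := by
        simpa using h
      have ht : ∀ c ∈ b :: t', ξ < c := ih hp' h'
      intro c hc
      rcases List.mem_cons.mp hc with rfl | hc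
      · have hb : ξ < b := ht b (by simp)
        have hab : c > b := (List.pairwise_cons.mp hp).1 b (by simp)
        exact hb.trans hab
      · exact ht c hc

lemma minS_spec {β : Ordinal.{u}} (s : ds β) {ξ : Ordinal.{u}} (h : ξ < minS s) :
    ∀ a ∈ s.1, ξ < a := minL_spec (ds_pairwise s) h

lemma minS_le {β : Ordinal.{u}} (s : ds β) : minS s ≤ β := by
  unfold minS
  rcases h : s.1.getLast? with _ | a
  · simp
  · simp only [Option.getD_some]
    exact le_of_lt (s.2.2 a (List.mem_of_getLast? h))

noncomputable def extT {β : Ordinal.{u}} (s : ds β) (ξ : Ordinal.{u}) : ds β :=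
  if h : ξ < minS s then
    ⟨s.1 ++ [ξ], by
      rw [List.Chain', List.isChain_iff_pairwise]
      rw [List.pairwise_append]
      exact ⟨ds_pairwise s, by simp, fun a ha b hb => by
        simp only [List.mem_singleton] at hb
        subst hb
        exact minS_spec s h a ha⟩,
      fun a ha => by
        rcases List.mem_append.mp ha with ha | ha
        · exact s.2.2 a ha
        · simp only [List.mem_singleton] at ha
          subst ha
          exact lt_of_lt_of_le h (minS_le s)⟩
  else s

lemma extT_val {β : Ordinal.{u}} (s : ds β) {ξ : Ordinal.{u}} (h : ξ < minS s) :
    (extT s ξ).1 = s.1 ++ [ξ] := by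
  unfold extT; erw [dif_pos h]

lemma extT_length {β : Ordinal.{u}} (s : ds β) {ξ : Ordinal.{u}} (h : ξ < minS s) :
    (extT s ξ).1.length = s.1.length + 1 := by
  rw [extT_val s h]; simp

lemma minS_extT {β : Ordinal.{u}} (s : ds β) {ξ : Ordinal.{u}} (h : ξ < minS s) :
    minS (extT s ξ) = ξ := by
  unfold minS
  rw [extT_val s h]
  simp


/-! ### Embeddings below a stem -/

def EmbEx {L : Ordinal.{u}} {C : Type u} (F : ds L → C) (s : ds L) (x : Ordinal.{u})
    (c : ℕ → C) : Prop :=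
  ∃ φ : ds x → ds L,
    (∀ η, (φ η).1.length = s.1.length + η.1.length) ∧
    (∀ η₁ η₂, η₁.1 <+: η₂.1 ↔ (φ η₁).1 <+: (φ η₂).1) ∧
    ((φ (dsNil x)).1 = s.1) ∧
    (∀ η n, η.1.length = n + 1 → F (φ η) = c n)

lemma ds_zero_nil (η : ds (0 : Ordinal.{u})) : η.1 = [] := by
  rcases h : η.1 with _ | ⟨a, t⟩
  · rfl
  · exact absurd (η.2.2 a (by rw [h]; simp)) not_lt_zero

lemma EmbEx.zero {L : Ordinal.{u}} {C : Type u} (F : ds L → C) (s : ds L) (c : ℕ → C) :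
    EmbEx F s 0 c := by
  refine ⟨fun _ => s, fun η => ?_, fun η₁ η₂ => ?_, rfl, fun η n hn => ?_⟩
  · rw [ds_zero_nil η]; simp
  · rw [ds_zero_nil η₁, ds_zero_nil η₂]
    exact iff_of_true List.nil_prefix (List.prefix_refl _)
  · rw [ds_zero_nil η] at hn; simp at hn

lemma EmbEx.mono {L : Ordinal.{u}} {C : Type u} {F : ds L → C} {s : ds L} {x x' : Ordinal.{u}}
    {c : ℕ → C} (h : EmbEx F s x c) (hx : x' ≤ x) : EmbEx F s x' c := by
  obtain ⟨φ, h1, h2, h3, h4⟩ := h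
  refine ⟨fun η => φ ⟨η.1, η.2.1, fun a ha => lt_of_lt_of_le (η.2.2 a ha) hx⟩,
    fun η => h1 _, fun η₁ η₂ => h2 ⟨η₁.1, η₁.2.1, fun a ha => lt_of_lt_of_le (η₁.2.2 a ha) hx⟩
      ⟨η₂.1, η₂.2.1, fun a ha => lt_of_lt_of_le (η₂.2.2 a ha) hx⟩,
    h3, fun η n hn => h4 _ n hn⟩

/-! ### gluing embeddings -/

def subCons {x : Ordinal.{u}} (a : Ordinal.{u}) (t : List Ordinal.{u})
    (p : (a :: t).Chain' (· > ·) ∧ ∀ b ∈ a :: t, b < x) : ds a :=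
  ⟨t, p.1.tail, fun b hb =>
    (List.pairwise_cons.mp (List.isChain_iff_pairwise.mp p.1)).1 b hb⟩

noncomputable def glueFun {L x : Ordinal.{u}} (s : ds L)
    (ψ : (y : {y : Ordinal.{u} // y < x}) → ds y.1 → ds L) : ds x → ds L :=
  fun η =>
    match η with
    | ⟨[], _⟩ => s
    | ⟨a :: t, p⟩ => ψ ⟨a, p.2 a (List.mem_cons_self)⟩ (subCons a t p)

lemma glueFun_nil {L x : Ordinal.{u}} (s : ds L)
    (ψ : (y : {y : Ordinal.{u} // y < x}) → ds y.1 → ds L) (p) :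
    glueFun s ψ ⟨[], p⟩ = s := rfl

lemma glueFun_cons {L x : Ordinal.{u}} (s : ds L)
    (ψ : (y : {y : Ordinal.{u} // y < x}) → ds y.1 → ds L) (a t p) :
    glueFun s ψ ⟨a :: t, p⟩ = ψ ⟨a, p.2 a (List.mem_cons_self)⟩ (subCons a t p) := rfl

lemma glue {L : Ordinal.{u}} {C : Type u} (F : ds L → C) (s : ds L) (x : Ordinal.{u}) (e : C)
    (c : ℕ → C) (W : Set Ordinal.{u})
    (hW1 : ∀ ξ ∈ W, ξ < minS s)
    (hW2 : ∀ ξ ∈ W, F (extT s ξ) = e)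
    (hW3 : ∀ ξ ∈ W, ∀ x' < x, EmbEx F (extT s ξ) x' c)
    (inj : {y : Ordinal.{u} // y < x} ↪ W) :
    EmbEx F s x (fun n => Nat.casesOn n e c) := by
  classical
  have Hc : ∀ y : {y : Ordinal.{u} // y < x}, ∃ φ : ds y.1 → ds L,
      (∀ η, (φ η).1.length = (extT s (inj y).1).1.length + η.1.length) ∧
      (∀ η₁ η₂, η₁.1 <+: η₂.1 ↔ (φ η₁).1 <+: (φ η₂).1) ∧
      ((φ (dsNil y.1)).1 = (extT s (inj y).1).1) ∧
      (∀ η n, η.1.length = n + 1 → F (φ η) = c n) :=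
    fun y => hW3 (inj y).1 (inj y).2 y.1 y.2
  choose ψ h1 h2 h3 h4 using Hc
  have hvy : ∀ y : {y : Ordinal.{u} // y < x}, ((inj y : Ordinal.{u}) < minS s) :=
    fun y => hW1 (inj y).1 (inj y).2
  have hext : ∀ (y : {y : Ordinal.{u} // y < x}) (η' : ds y.1),
      s.1 ++ [(inj y : Ordinal.{u})] <+: (ψ y η').1 := by
    intro y η'
    have h0 : (ψ y (dsNil y.1)).1 <+: (ψ y η').1 :=
      (h2 y (dsNil y.1) η').mp List.nil_prefix
    rw [h3 y, extT_val s (hvy y)] at h0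
    exact h0
  have hlen : ∀ (y : {y : Ordinal.{u} // y < x}) (η' : ds y.1),
      (ψ y η').1.length = s.1.length + 1 + η'.1.length := by
    intro y η'
    rw [h1 y η', extT_length s (hvy y)]
  refine ⟨glueFun s ψ, ?_, ?_, ?_, ?_⟩
  · -- lengths
    rintro ⟨l, p⟩
    rcases l with _ | ⟨a, t⟩
    · rw [glueFun_nil]; simp
    · rw [glueFun_cons]
      rw [hlen]
      simp [subCons]
      omega
  · -- prefix iff
    rintro ⟨l₁, p₁⟩ ⟨l₂, p₂⟩
    rcases l₁ with _ | ⟨a₁, t₁⟩ <;> rcases l₂ with _ | ⟨a₂, t₂⟩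
    · simp only [glueFun_nil]
      exact iff_of_true List.nil_prefix (List.prefix_refl _)
    · simp only [glueFun_nil, glueFun_cons]
      exact iff_of_true List.nil_prefix ((List.prefix_append s.1 _).trans (hext _ _))
    · simp only [glueFun_nil, glueFun_cons]
      refine iff_of_false (by simp) ?_
      intro hpre
      have := hpre.length_le
      rw [hlen] at this
      omega
    · simp only [glueFun_cons]
      by_cases ha : a₁ = a₂
      · subst ha
        show (a₁ :: t₁) <+: (a₁ :: t₂) ↔ _
        rw [List.cons_prefix_cons]
        simp only [true_and]
        exact h2 ⟨a₁, p₁.2 a₁ (List.mem_cons_self)⟩ (subCons a₁ t₁ p₁) (subCons a₁ t₂ p₂)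
      · show (a₁ :: t₁) <+: (a₂ :: t₂) ↔ _
        rw [List.cons_prefix_cons]
        refine iff_of_false (fun hc => ha hc.1) (fun hpre => ha ?_)
        have pf₁ : a₁ < x := p₁.2 a₁ (List.mem_cons_self)
        have pf₂ : a₂ < x := p₂.2 a₂ (List.mem_cons_self)
        have e₁ := hext ⟨a₁, pf₁⟩ (subCons a₁ t₁ p₁)
        have e₂ := hext ⟨a₂, pf₂⟩ (subCons a₂ t₂ p₂)
        have e₁' := e₁.trans hpre
        have hlen12 : (s.1 ++ [((inj ⟨a₁, pf₁⟩ : Ordinal.{u}))]).length =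
            (s.1 ++ [((inj ⟨a₂, pf₂⟩ : Ordinal.{u}))]).length := by simp
        have heq : s.1 ++ [((inj ⟨a₁, pf₁⟩ : Ordinal.{u}))] =
            s.1 ++ [((inj ⟨a₂, pf₂⟩ : Ordinal.{u}))] :=
          (List.prefix_of_prefix_length_le e₁' e₂ (le_of_eq hlen12)).eq_of_length hlen12
        have hxi : ((inj ⟨a₁, pf₁⟩ : Ordinal.{u})) = ((inj ⟨a₂, pf₂⟩ : Ordinal.{u})) := by
          have := List.append_cancel_left heq
          simpa using this
        have := inj.injective (Subtype.ext hxi)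
        exact congrArg Subtype.val this
  · -- root
    rfl
  · -- colors
    rintro ⟨l, p⟩ n hn
    rcases l with _ | ⟨a, t⟩
    · simp at hn
    · rw [glueFun_cons]
      rcases t with _ | ⟨b, t'⟩
      · have hn0 : n = 0 := by simpa using hn.symm
        subst hn0
        have hroot : subCons a ([] : List Ordinal.{u}) p = dsNil a := rfl
        set y : {y : Ordinal.{u} // y < x} := ⟨a, p.2 a (List.mem_cons_self)⟩ with hy
        have hv : ψ y (subCons a [] p) = extT s (inj y).1 := by
          apply Subtype.ext
          rw [hroot]
          exact h3 y
        rw [hv]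
        exact hW2 _ (inj y).2
      · have hlen' : (subCons a (b :: t') p).1.length = t'.length + 1 := by
          simp [subCons]
        have hcol := h4 ⟨a, p.2 a (List.mem_cons_self)⟩
          (subCons a (b :: t') p) t'.length hlen'
        rw [hcol]
        have hn' : n = t'.length + 1 := by simp at hn; omega
        subst hn'
        rfl


/-! ### cardinal toolkit -/

universe v

lemma exists_big_fiber {A B : Type v} (f : A → B) (b : Cardinal.{v}) (hb : ℵ₀ ≤ b)
    (hB : #B ≤ b) (hA : b < #A) : ∃ y : B, b < #{a : A // f a = y} := by
  by_contra hcon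
  push_neg at hcon
  have hle : #A ≤ b * b := by
    calc #A = #(Σ y : B, {a : A // f a = y}) := Cardinal.mk_congr (Equiv.sigmaFiberEquiv f).symm
    _ = Cardinal.sum (fun y : B => #{a : A // f a = y}) := Cardinal.mk_sigma _
    _ ≤ Cardinal.sum (fun _ : B => b) := Cardinal.sum_le_sum _ _ hcon
    _ = #B * b := Cardinal.sum_const' B b
    _ ≤ b * b := mul_le_mul_left hB b
  rw [Cardinal.mul_eq_self hb] at hle
  exact absurd hA (not_lt.mpr hle)

lemma mk_Ico_ordinal (b o : Ordinal.{u}) :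
    #(Set.Ico b (b + o)) = Cardinal.lift.{u + 1} o.card := by
  have e : Set.Iio o ≃ Set.Ico b (b + o) := by
    refine ⟨fun z => ⟨b + z.1, le_self_add, (add_lt_add_iff_left b).mpr z.2⟩,
      fun z => ⟨z.1 - b, ?_⟩, fun z => ?_, fun z => ?_⟩
    · have h1 : b ≤ z.1 := z.2.1
      have h2 : z.1 < b + o := z.2.2
      have : b + (z.1 - b) = z.1 := Ordinal.add_sub_cancel_of_le h1
      have := this ▸ h2
      exact (add_lt_add_iff_left b).mp this
    · apply Subtype.ext
      exact Ordinal.add_sub_cancel b z.1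
    · apply Subtype.ext
      exact Ordinal.add_sub_cancel_of_le z.2.1
  rw [← Ordinal.mk_Iio_ordinal o]
  exact Cardinal.mk_congr e.symm

lemma unbounded_of_big {S : Set Ordinal.{u}} {c : Cardinal.{u}}
    (hcard : Cardinal.lift.{u + 1} c.ord.card ≤ #S) {β : Ordinal.{u}} (hβ : β < c.ord) :
    ∃ ξ ∈ S, β ≤ ξ := by
  by_contra hcon
  push_neg at hcon
  have hsub : S ⊆ Set.Iio β := fun ξ hξ => hcon ξ hξ
  have h1 : #S ≤ Cardinal.lift.{u + 1} β.card := by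
    rw [← Ordinal.mk_Iio_ordinal β]
    exact Cardinal.mk_le_mk_of_subset hsub
  have h2 : β.card < c.ord.card := by
    rw [Cardinal.card_ord]
    exact Cardinal.lt_ord.mp hβ
  have := lt_of_le_of_lt (hcard.trans h1) (Cardinal.lift_lt.mpr h2)
  exact lt_irrefl _ this


/-! ### the main setting -/

noncomputable def kap (α : Ordinal.{u}) (C : Type u) : Cardinal.{u} := α.card ^ (#C ^ ℵ₀)

noncomputable def lamO (α : Ordinal.{u}) (C : Type u) : Ordinal.{u} :=
  (Order.succ (Order.succ (kap α C))).ord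

section Main

variable (α : Ordinal.{u}) {C : Type u} (F : ds (lamO α C) → C)

def HvalSet (s : ds (lamO α C)) (c : ℕ → C) : Set Ordinal.{u} :=
  {o | ∃ y, y ≤ α ∧ EmbEx F s y c ∧ o = y + 1}

lemma HvalSet_bdd (s : ds (lamO α C)) (c : ℕ → C) : BddAbove (HvalSet α F s c) := by
  refine ⟨α + 1, fun o ho => ?_⟩
  obtain ⟨y, hy, _, rfl⟩ := ho
  exact add_le_add_left hy 1

lemma HvalSet_ne (s : ds (lamO α C)) (c : ℕ → C) : (HvalSet α F s c).Nonempty :=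
  ⟨0 + 1, 0, zero_le, EmbEx.zero F s c, rfl⟩

noncomputable def Hval (s : ds (lamO α C)) (c : ℕ → C) : Ordinal.{u} :=
  sSup (HvalSet α F s c)

lemma Hval_le (s : ds (lamO α C)) (c : ℕ → C) : Hval α F s c ≤ α + 1 := by
  refine csSup_le (HvalSet_ne α F s c) (fun o ho => ?_)
  obtain ⟨y, hy, _, rfl⟩ := ho
  exact add_le_add_left hy 1

lemma Hval_enc {s : ds (lamO α C)} {c : ℕ → C} {y : Ordinal.{u}} (hy : y ≤ α)
    (he : EmbEx F s y c) : y + 1 ≤ Hval α F s c :=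
  le_csSup (HvalSet_bdd α F s c) ⟨y, hy, he, rfl⟩

lemma Hval_dec {s : ds (lamO α C)} {c : ℕ → C} {x : Ordinal.{u}}
    (h : x + 1 ≤ Hval α F s c) : EmbEx F s x c := by
  have hx : x < sSup (HvalSet α F s c) := by
    refine lt_of_lt_of_le ?_ h
    rw [Ordinal.add_one_eq_succ]
    exact Order.lt_succ x
  obtain ⟨o, ho, hlt⟩ := (lt_csSup_iff (HvalSet_bdd α F s c) (HvalSet_ne α F s c)).mp hx
  obtain ⟨y, hy, he, rfl⟩ := ho
  rw [Ordinal.add_one_eq_succ, Order.lt_succ_iff] at hlt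
  exact he.mono hlt

def Xt : Type (u + 1) := ↥(Set.Iic (α + 1 : Ordinal.{u}))

def DataT (C : Type u) : Type (u + 1) := C × ((ℕ → C) → Xt α)

noncomputable def dataOf (s : ds (lamO α C)) : DataT α C :=
  (F s, fun c => ⟨Hval α F s c, Hval_le α F s c⟩)

def Wit (d : DataT α C) (t : ds (lamO α C)) (W : Set Ordinal.{u}) : Prop :=
  (∀ ξ ∈ W, ξ < minS t) ∧ Cardinal.lift.{u + 1} (Order.succ (kap α C)) ≤ #W ∧
    ∀ ξ ∈ W, dataOf α F (extT t ξ) = d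

end Main


/-! ### cardinal arithmetic of the setting -/

section Arith

variable (α : Ordinal.{u}) (C : Type u)

lemma Cne0 (h2C : (2 : Cardinal.{u}) ≤ #C) : (#C : Cardinal.{u}) ≠ 0 := by
  intro h; rw [h] at h2C; exact absurd h2C (by norm_num)

lemma muℵ_ne (h2C : (2 : Cardinal.{u}) ≤ #C) : (#C ^ ℵ₀ : Cardinal.{u}) ≠ 0 :=
  Cardinal.power_ne_zero _ (Cne0 C h2C)

lemma aleph0_le_muℵ (h2C : (2 : Cardinal.{u}) ≤ #C) : ℵ₀ ≤ (#C ^ ℵ₀ : Cardinal.{u}) :=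
  (Cardinal.cantor ℵ₀).le.trans (Cardinal.power_le_power_right h2C)

lemma kap_aleph0 (h2α : 2 ≤ α.card) (h2C : (2 : Cardinal.{u}) ≤ #C) : ℵ₀ ≤ kap α C :=
  (aleph0_le_muℵ C h2C).trans
    ((Cardinal.cantor _).le.trans (Cardinal.power_le_power_right h2α))

lemma card_le_kap (h2α : 2 ≤ α.card) (h2C : (2 : Cardinal.{u}) ≤ #C) : α.card ≤ kap α C := by
  have h1 : (1 : Cardinal.{u}) ≤ #C ^ ℵ₀ :=
    Cardinal.one_le_iff_ne_zero.mpr (muℵ_ne C h2C)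
  exact Cardinal.self_le_power _ h1

lemma C_le_kap (h2α : 2 ≤ α.card) (h2C : (2 : Cardinal.{u}) ≤ #C) : #C ≤ kap α C := by
  have s1 : (#C : Cardinal.{u}) ≤ #C ^ ℵ₀ := Cardinal.self_le_power _ Cardinal.one_le_aleph0
  exact s1.trans ((Cardinal.cantor _).le.trans (Cardinal.power_le_power_right h2α))

lemma kap_pow : kap α C ^ (#C ^ ℵ₀ : Cardinal.{u}) = kap α C := by
  rw [kap, ← Cardinal.power_mul, ← Cardinal.power_add, Cardinal.aleph0_add_aleph0]

lemma Xt_card (h2α : 2 ≤ α.card) (h2C : (2 : Cardinal.{u}) ≤ #C) :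
    #(Xt α) ≤ Cardinal.lift.{u + 1} (kap α C) := by
  have he : Set.Iic (α + 1 : Ordinal.{u}) = Set.Iio ((α + 1) + 1) := by
    rw [Ordinal.add_one_eq_succ (α + 1)]
    exact (Order.Iio_succ _).symm
  have : #(Xt α) = Cardinal.lift.{u + 1} ((α + 1 + 1 : Ordinal.{u}).card) := by
    rw [Xt, he, Ordinal.mk_Iio_ordinal]
  rw [this]
  rw [Cardinal.lift_le]
  rw [Ordinal.card_add, Ordinal.card_add, Ordinal.card_one]
  have : α.card + 1 + 1 ≤ kap α C + kap α C := by
    have g1 : (1 : Cardinal.{u}) ≤ kap α C := le_trans (by norm_num) (kap_aleph0 α C h2α h2C)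
    have := add_le_add (add_le_add (card_le_kap α C h2α h2C) g1) g1
    refine le_trans this ?_
    have : kap α C + kap α C ≤ kap α C := le_of_eq (Cardinal.add_eq_self (kap_aleph0 α C h2α h2C))
    exact add_le_add this (le_refl _)
  refine le_trans this (le_of_eq (Cardinal.add_eq_self (kap_aleph0 α C h2α h2C)))

lemma arrow_card : #(ℕ → C) = (#C ^ ℵ₀ : Cardinal.{u}) := by
  rw [Cardinal.mk_arrow]
  simp

lemma HT_card (h2α : 2 ≤ α.card) (h2C : (2 : Cardinal.{u}) ≤ #C) :
    #((ℕ → C) → Xt α) ≤ Cardinal.lift.{u + 1} (kap α C) := by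
  rw [Cardinal.mk_arrow]
  have hbase : Cardinal.lift.{u} #(Xt α) ≤ Cardinal.lift.{u} (Cardinal.lift.{u + 1} (kap α C)) :=
    Cardinal.lift_le.mpr (Xt_card α C h2α h2C)
  refine le_trans (Cardinal.power_le_power_right hbase) ?_
  rw [Cardinal.lift_lift, arrow_card, ← Cardinal.lift_power, kap_pow]

lemma dataT_card (h2α : 2 ≤ α.card) (h2C : (2 : Cardinal.{u}) ≤ #C) :
    #(DataT α C) ≤ Cardinal.lift.{u + 1} (kap α C) := by
  rw [DataT, Cardinal.mk_prod]
  have b1 : Cardinal.lift.{u + 1} #C ≤ Cardinal.lift.{u + 1} (kap α C) :=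
    Cardinal.lift_le.mpr (C_le_kap α C h2α h2C)
  have b2 : Cardinal.lift.{u} #((ℕ → C) → Xt α) ≤ Cardinal.lift.{u + 1} (kap α C) := by
    have := Cardinal.lift_le.mpr (HT_card α C h2α h2C)
    rw [Cardinal.lift_lift] at this
    exact this
  refine le_trans (mul_le_mul' b1 b2) ?_
  rw [Cardinal.mul_eq_self]
  rw [Cardinal.aleph0_le_lift]
  exact kap_aleph0 α C h2α h2C

end Arith


/-! ### the extension step -/

section Step

variable (α : Ordinal.{u}) {C : Type u} (F : ds (lamO α C) → C)

lemma succ_kap_aleph0 (h2α : 2 ≤ α.card) (h2C : (2 : Cardinal.{u}) ≤ #C) :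
    ℵ₀ ≤ Order.succ (kap α C) :=
  (kap_aleph0 α C h2α h2C).trans (Order.le_succ _)

lemma add_theta_lt (h2α : 2 ≤ α.card) (h2C : (2 : Cardinal.{u}) ≤ #C)
    {β : Ordinal.{u}} (hβ : β < lamO α C) :
    β + (Order.succ (kap α C)).ord < lamO α C := by
  rw [lamO] at hβ ⊢
  rw [Cardinal.lt_ord] at hβ ⊢
  rw [Ordinal.card_add, Cardinal.card_ord]
  have hβc : β.card ≤ Order.succ (kap α C) := Order.lt_succ_iff.mp hβ
  have hle : β.card + Order.succ (kap α C) ≤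
      Order.succ (kap α C) + Order.succ (kap α C) := add_le_add hβc (le_refl _)
  refine lt_of_le_of_lt hle ?_
  rw [Cardinal.add_eq_self (succ_kap_aleph0 α h2α h2C)]
  exact Order.lt_succ _

lemma step_lemma (h2α : 2 ≤ α.card) (h2C : (2 : Cardinal.{u}) ≤ #C) (n : ℕ)
    (Ex : ds (lamO α C) → Prop)
    (h : ∀ β < lamO α C, ∃ t : ds (lamO α C), t.1.length = n ∧ β ≤ minS t ∧ Ex t) :
    ∃ d : DataT α C, ∀ β < lamO α C, ∃ t W, t.1.length = n ∧ Ex t ∧ Wit α F d t W ∧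
      ∀ ξ ∈ W, β ≤ ξ := by
  classical
  have key : ∀ β : ↥(Set.Iio (lamO α C)),
      ∃ (d : DataT α C) (t : ds (lamO α C)) (W : Set Ordinal.{u}),
      t.1.length = n ∧ Ex t ∧ Wit α F d t W ∧ ∀ ξ ∈ W, β.1 ≤ ξ := by
    intro β
    obtain ⟨t, hlen, hmin, hex⟩ := h (β.1 + (Order.succ (kap α C)).ord)
      (add_theta_lt α h2α h2C β.2)
    have hIsub : ∀ ξ ∈ Set.Ico β.1 (β.1 + (Order.succ (kap α C)).ord), ξ < minS t :=
      fun ξ hξ => lt_of_lt_of_le hξ.2 hmin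
    have hIcard : #(Set.Ico β.1 (β.1 + (Order.succ (kap α C)).ord)) =
        Cardinal.lift.{u + 1} (Order.succ (kap α C)) := by
      rw [mk_Ico_ordinal, Cardinal.card_ord]
    obtain ⟨d, hd⟩ := exists_big_fiber
      (fun ξ : ↥(Set.Ico β.1 (β.1 + (Order.succ (kap α C)).ord)) => dataOf α F (extT t ξ.1))
      (Cardinal.lift.{u + 1} (kap α C))
      (by rw [Cardinal.aleph0_le_lift]; exact kap_aleph0 α C h2α h2C)
      (dataT_card α C h2α h2C)
      (by rw [hIcard]; exact Cardinal.lift_lt.mpr (Order.lt_succ _))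
    refine ⟨d, t, {ξ | ξ ∈ Set.Ico β.1 (β.1 + (Order.succ (kap α C)).ord) ∧
      dataOf α F (extT t ξ) = d}, hlen, hex, ⟨?_, ?_, ?_⟩, ?_⟩
    · intro ξ hξ; exact hIsub ξ hξ.1
    · have hinj : Function.Injective
          (fun z : {a : ↥(Set.Ico β.1 (β.1 + (Order.succ (kap α C)).ord)) //
              dataOf α F (extT t a.1) = d} =>
            (⟨z.1.1, z.1.2, z.2⟩ : {ξ : Ordinal.{u} //
              ξ ∈ Set.Ico β.1 (β.1 + (Order.succ (kap α C)).ord) ∧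
              dataOf α F (extT t ξ) = d})) := by
        intro z₁ z₂ hz
        have h0 := Subtype.ext_iff.mp hz
        exact Subtype.ext (Subtype.ext h0)
      have h1 : Cardinal.lift.{u + 1} (Order.succ (kap α C)) ≤
          #{a : ↥(Set.Ico β.1 (β.1 + (Order.succ (kap α C)).ord)) //
            dataOf α F (extT t a.1) = d} := by
        rw [Cardinal.lift_succ]
        exact Order.succ_le_of_lt hd
      exact h1.trans (Cardinal.mk_le_of_injective hinj)
    · intro ξ hξ; exact hξ.2
    · intro ξ hξ; exact hξ.1.1
  choose D T Wf hT1 hT2 hT3 hT4 using key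
  have hIio : #(Set.Iio (lamO α C)) =
      Cardinal.lift.{u + 1} (Order.succ (Order.succ (kap α C))) := by
    rw [lamO, Ordinal.mk_Iio_ordinal, Cardinal.card_ord]
  obtain ⟨d, hd⟩ := exists_big_fiber D (Cardinal.lift.{u + 1} (Order.succ (kap α C)))
    (by rw [Cardinal.aleph0_le_lift]; exact succ_kap_aleph0 α h2α h2C)
    ((dataT_card α C h2α h2C).trans (Cardinal.lift_le.mpr (Order.le_succ _)))
    (by rw [hIio]; exact Cardinal.lift_lt.mpr (Order.lt_succ _))
  refine ⟨d, fun β hβ => ?_⟩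
  have hScard : Cardinal.lift.{u + 1} (Order.succ (Order.succ (kap α C))) ≤
      #{β' : Ordinal.{u} | ∃ h' : β' < lamO α C, D ⟨β', h'⟩ = d} := by
    have hinj : Function.Injective
        (fun z : {b : ↥(Set.Iio (lamO α C)) // D b = d} =>
          (⟨z.1.1, z.1.2, z.2⟩ : {β' : Ordinal.{u} // ∃ h' : β' < lamO α C, D ⟨β', h'⟩ = d})) := by
      intro z₁ z₂ hz
      have h0 := Subtype.ext_iff.mp hz
      exact Subtype.ext (Subtype.ext h0)
    refine le_trans ?_ (Cardinal.mk_le_of_injective hinj)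
    rw [Cardinal.lift_succ]
    exact Order.succ_le_of_lt hd
  have hβ' : β < (Order.succ (Order.succ (kap α C))).ord := by rw [← lamO]; exact hβ
  obtain ⟨β', hβ'S, hββ'⟩ := unbounded_of_big
    (by rw [Cardinal.card_ord]; exact hScard) hβ'
  obtain ⟨hβ'lt, hD⟩ := hβ'S
  exact ⟨T ⟨β', hβ'lt⟩, Wf ⟨β', hβ'lt⟩, hT1 _, hT2 _, by rw [← hD]; exact hT3 _,
    fun ξ hξ => le_trans hββ' (hT4 _ ξ hξ)⟩

end Step


/-! ### the chain -/

section Chain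

variable (α : Ordinal.{u}) {C : Type u} (F : ds (lamO α C) → C)

def LinkEx (d : DataT α C) : ds (lamO α C) → Prop :=
  fun t' => ∃ t W ξ, Wit α F d t W ∧ ξ ∈ W ∧ t' = extT t ξ

lemma lamO_pos (h2α : 2 ≤ α.card) (h2C : (2 : Cardinal.{u}) ≤ #C) :
    (0 : Ordinal.{u}) < lamO α C := by
  rw [lamO, Cardinal.lt_ord, Ordinal.card_zero]
  refine lt_of_lt_of_le ?_ (Order.le_succ _)
  refine lt_of_lt_of_le ?_ (Order.le_succ _)
  exact lt_of_lt_of_le Cardinal.aleph0_pos ((kap_aleph0 α C h2α h2C))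

lemma W_nonempty {d : DataT α C} {t : ds (lamO α C)} {W : Set Ordinal.{u}}
    (h : Wit α F d t W) : ∃ ξ, ξ ∈ W := by
  have hne : #W ≠ 0 := by
    intro h0
    have h21 := h.2.1
    rw [h0, le_zero_iff] at h21
    rw [Cardinal.lift_eq_zero] at h21
    exact absurd h21 (ne_of_gt (lt_of_le_of_lt zero_le (Order.lt_succ _)))
  obtain ⟨⟨ξ, hξ⟩⟩ := Cardinal.mk_ne_zero_iff.mp hne
  exact ⟨ξ, hξ⟩

lemma chain_exists (h2α : 2 ≤ α.card) (h2C : (2 : Cardinal.{u}) ≤ #C) :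
    ∃ g : ℕ → DataT α C,
      (∃ W₀, Wit α F (g 0) (dsNil (lamO α C)) W₀) ∧
      ∀ n, ∃ t W ξ W', Wit α F (g n) t W ∧ ξ ∈ W ∧ Wit α F (g (n + 1)) (extT t ξ) W' := by
  classical
  let St := {p : ℕ × DataT α C × (ds (lamO α C) → Prop) //
    ∀ β < lamO α C, ∃ t W, t.1.length = p.1 ∧ p.2.2 t ∧ Wit α F p.2.1 t W ∧ ∀ ξ ∈ W, β ≤ ξ}
  have hstep : ∀ s : St, ∃ s' : St, s'.1.1 = s.1.1 + 1 ∧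
      s'.1.2.2 = LinkEx α F s.1.2.1 := by
    intro s
    obtain ⟨d', hd'⟩ := step_lemma α F h2α h2C (s.1.1 + 1) (LinkEx α F s.1.2.1)
      (by
        intro β hβ
        obtain ⟨t, W, hlen, _, hWit, hhigh⟩ := s.2 β hβ
        obtain ⟨ξ, hξ⟩ := W_nonempty α F hWit
        have hv : ξ < minS t := hWit.1 ξ hξ
        refine ⟨extT t ξ, ?_, ?_, ⟨t, W, ξ, hWit, hξ, rfl⟩⟩
        · rw [extT_length t hv, hlen]
        · rw [minS_extT t hv]
          exact hhigh ξ hξ)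
    exact ⟨⟨(s.1.1 + 1, d', LinkEx α F s.1.2.1), hd'⟩, rfl, rfl⟩
  choose stepF hstep1 hstep2 using hstep
  obtain ⟨d₀, hd₀⟩ := step_lemma α F h2α h2C 0 (fun _ => True)
    (by
      intro β hβ
      exact ⟨dsNil (lamO α C), rfl, le_of_lt hβ, trivial⟩)
  let s₀ : St := ⟨(0, d₀, fun _ => True), hd₀⟩
  let seq : ℕ → St := fun n => stepF^[n] s₀
  have hseq : ∀ n, seq (n + 1) = stepF (seq n) := fun n =>
    Function.iterate_succ_apply' stepF n s₀
  refine ⟨fun n => (seq n).1.2.1, ?_, ?_⟩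
  · obtain ⟨t, W, hlen, _, hWit, _⟩ := (seq 0).2 0 (lamO_pos α h2α h2C)
    have ht : t = dsNil (lamO α C) := by
      apply Subtype.ext
      have : t.1.length = 0 := hlen
      exact List.length_eq_zero_iff.mp this
    exact ⟨W, ht ▸ hWit⟩
  · intro n
    obtain ⟨t', W', hlen', hEx', hWit', _⟩ := (seq (n + 1)).2 0 (lamO_pos α h2α h2C)
    have hfn : (seq (n + 1)).1.2.2 = LinkEx α F ((seq n).1.2.1) := by
      rw [hseq n]
      exact hstep2 (seq n)
    rw [hfn] at hEx'
    obtain ⟨t, W, ξ, hW, hξ, rfl⟩ := hEx'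
    exact ⟨t, W, ξ, W', hW, hξ, hWit'⟩

end Chain


/-! ### the main induction -/

section QL

variable (α : Ordinal.{u}) {C : Type u} (F : ds (lamO α C) → C)

lemma main_induction (h2α : 2 ≤ α.card) (h2C : (2 : Cardinal.{u}) ≤ #C) (g : ℕ → DataT α C)
    (hlink : ∀ n, ∃ t W ξ W', Wit α F (g n) t W ∧ ξ ∈ W ∧ Wit α F (g (n + 1)) (extT t ξ) W') :
    ∀ x : Ordinal.{u}, x ≤ α → ∀ (n : ℕ) (t : ds (lamO α C)) (W : Set Ordinal.{u})
      (ξ : Ordinal.{u}), Wit α F (g n) t W → ξ ∈ W →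
      EmbEx F (extT t ξ) x (fun j => (g (n + 1 + j)).1) := by
  intro x
  induction x using Ordinal.induction with
  | h x IH =>
    intro hxα n t W ξ hWit hmem
    obtain ⟨th, Wh, ξh, Wh', hW1, hm1, hW2⟩ := hlink n
    have hglue : EmbEx F (extT th ξh) x (fun j => (g (n + 1 + j)).1) := by
      have hcard : #{y : Ordinal.{u} // y < x} ≤ #Wh' := by
        have e1 : #{y : Ordinal.{u} // y < x} = Cardinal.lift.{u + 1} x.card :=
          Ordinal.mk_Iio_ordinal x
        rw [e1]
        refine le_trans (Cardinal.lift_le.mpr ((Ordinal.card_le_card hxα).trans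
          ((card_le_kap α C h2α h2C).trans (Order.le_succ _)))) hW2.2.1
      have inj : {y : Ordinal.{u} // y < x} ↪ Wh' := (Cardinal.le_def _ _).mp hcard |>.some
      have hres := glue F (extT th ξh) x ((g (n + 1)).1) (fun j => (g (n + 2 + j)).1) Wh'
        hW2.1
        (fun ζ hζ => congrArg Prod.fst (hW2.2.2 ζ hζ))
        (fun ζ hζ x' hx' => IH x' hx' (le_trans (le_of_lt hx') hxα) (n + 1)
          (extT th ξh) Wh' ζ hW2 hζ)
        inj
      have hcc : (fun n' => Nat.casesOn n' ((g (n + 1)).1) (fun j => (g (n + 2 + j)).1) : ℕ → C)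
          = (fun j => (g (n + 1 + j)).1) := by
        funext j
        cases j with
        | zero => rfl
        | succ k => exact congrArg (fun m => (g m).1) (by omega)
      rw [hcc] at hres
      exact hres
    have henc : x + 1 ≤ Hval α F (extT th ξh) (fun j => (g (n + 1 + j)).1) :=
      Hval_enc α F hxα hglue
    have hdat1 : dataOf α F (extT th ξh) = g n := hW1.2.2 ξh hm1
    have hdat2 : dataOf α F (extT t ξ) = g n := hWit.2.2 ξ hmem
    have hHv : Hval α F (extT t ξ) (fun j => (g (n + 1 + j)).1) =
        Hval α F (extT th ξh) (fun j => (g (n + 1 + j)).1) := by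
      have h2 : (dataOf α F (extT t ξ)).2 = (dataOf α F (extT th ξh)).2 := by
        rw [hdat1, hdat2]
      have h3 := congrFun h2 (fun j => (g (n + 1 + j)).1)
      exact congrArg Subtype.val h3
    exact Hval_dec α F (by rw [hHv]; exact henc)

end QL


/-! ### final assembly -/

section Final

variable (α : Ordinal.{u}) {C : Type u} (F : ds (lamO α C) → C)

lemma lamO_pos' : (0 : Ordinal.{u}) < lamO α C := by
  rw [lamO, Cardinal.lt_ord, Ordinal.card_zero]
  exact lt_of_le_of_lt zero_le
    (lt_of_lt_of_le (Order.lt_succ (kap α C)) (Order.le_succ _))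

lemma main_case (h2α : 2 ≤ α.card) (h2C : (2 : Cardinal.{u}) ≤ #C) :
    ∃ (φ : ds α → ds (lamO α C)) (c : ℕ → C),
      (∀ η : ds α, ((φ η).1).length = (η.1).length) ∧
      (∀ η₁ η₂ : ds α, η₁.1 <+: η₂.1 ↔ (φ η₁).1 <+: (φ η₂).1) ∧
      (∀ (η : ds α) (n : ℕ), η.1.length = n + 1 → F (φ η) = c n) := by
  classical
  obtain ⟨g, ⟨W₀, hW₀⟩, hlink⟩ := chain_exists α F h2α h2C
  have hcard : #{y : Ordinal.{u} // y < α} ≤ #W₀ := by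
    have e1 : #{y : Ordinal.{u} // y < α} = Cardinal.lift.{u + 1} α.card :=
      Ordinal.mk_Iio_ordinal α
    rw [e1]
    refine le_trans (Cardinal.lift_le.mpr
      ((card_le_kap α C h2α h2C).trans (Order.le_succ _))) hW₀.2.1
  have inj : {y : Ordinal.{u} // y < α} ↪ W₀ := (Cardinal.le_def _ _).mp hcard |>.some
  have hres := glue F (dsNil (lamO α C)) α ((g 0).1) (fun j => (g (1 + j)).1) W₀
    hW₀.1
    (fun ξ hξ => congrArg Prod.fst (hW₀.2.2 ξ hξ))
    (fun ξ hξ x' hx' => main_induction α F h2α h2C g hlink x' (le_of_lt hx') 0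
      (dsNil (lamO α C)) W₀ ξ hW₀ hξ)
    inj
  have hcc : (fun n' => Nat.casesOn n' ((g 0).1) (fun j => (g (1 + j)).1) : ℕ → C)
      = (fun j => (g j).1) := by
    funext j
    cases j with
    | zero => rfl
    | succ k => exact congrArg (fun m => (g m).1) (by omega)
  rw [hcc] at hres
  obtain ⟨φ, h1, h2, h3, h4⟩ := hres
  refine ⟨φ, fun j => (g j).1, fun η => ?_, h2, h4⟩
  rw [h1 η]
  simp [dsNil]

end Final

end KS

open KS

/-- Komjáth–Shelah partition theorem on well-founded trees:
for any ordinal `α` and cardinal `μ`, setting `ν = (|α|^(μ^ℵ₀))⁺`, any colouring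
`F : ds(ν⁺) → μ` admits a tree embedding `φ : ds(α) → ds(ν⁺)` (preserving the
end-extension order and lengths) and `c : ω → μ` such that every `η ∈ ds(α)` of
length `n+1` satisfies `F(φ(η)) = c(n)`. -/
theorem komjath_shelah (α : Ordinal.{u}) (μ : Cardinal.{u}) (C : Type u) (hC : #C = μ)
    (F : ds (Order.succ (Order.succ (α.card ^ (μ ^ ℵ₀)))).ord → C) :
    ∃ (φ : ds α → ds (Order.succ (Order.succ (α.card ^ (μ ^ ℵ₀)))).ord) (c : ℕ → C),
      (∀ η : ds α, ((φ η).1).length = (η.1).length) ∧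
      (∀ η₁ η₂ : ds α, η₁.1 <+: η₂.1 ↔ (φ η₁).1 <+: (φ η₂).1) ∧
      (∀ (η : ds α) (n : ℕ), η.1.length = n + 1 → F (φ η) = c n) := by
  classical
  subst hC
  have F' : ds (lamO α C) → C := F
  have hCne : Nonempty C := ⟨F (dsNil _)⟩
  have hCne0 : (#C : Cardinal.{u}) ≠ 0 := Cardinal.mk_ne_zero_iff.mpr hCne
  rcases subsingleton_or_nontrivial C with hsub | hnt
  · -- trivial colours
    have hαlam : α < lamO α C := by
      rw [lamO, Cardinal.lt_ord]
      have h1 : α.card ≤ kap α C := by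
        refine Cardinal.self_le_power _ ?_
        exact Cardinal.one_le_iff_ne_zero.mpr (Cardinal.power_ne_zero _ hCne0)
      exact lt_of_le_of_lt h1 (lt_of_lt_of_le (Order.lt_succ _) (Order.le_succ _))
    refine ⟨fun η => ⟨η.1, η.2.1, fun a ha => lt_trans (η.2.2 a ha) hαlam⟩,
      fun _ => F (dsNil _), fun η => rfl, fun η₁ η₂ => Iff.rfl, fun η n hn => ?_⟩
    exact Subsingleton.elim _ _
  · have h2C : (2 : Cardinal.{u}) ≤ #C := Cardinal.two_le_iff.mpr (exists_pair_ne C)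
    rcases lt_or_ge α 2 with hα2 | h2α
    · -- small α
      have hα1 : α ≤ 1 := by
        rw [← one_add_one_eq_two, Ordinal.add_one_eq_succ, Order.lt_succ_iff] at hα2
        exact hα2
      rcases Ordinal.le_one_iff.mp hα1 with rfl | rfl
      · -- α = 0
        refine ⟨fun _ => dsNil _, fun _ => F (dsNil _), fun η => ?_, fun η₁ η₂ => ?_,
          fun η n hn => ?_⟩
        · dsimp only
          rw [ds_zero_nil η]
          simp [dsNil]
        · dsimp only
          rw [ds_zero_nil η₁, ds_zero_nil η₂]
          exact iff_of_true (List.prefix_refl _) (List.prefix_refl _)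
        · simp [ds_zero_nil η] at hn
      · -- α = 1
        have hsing : ∀ a ∈ ([0] : List Ordinal.{u}), a < lamO 1 C := by
          intro a ha
          simp only [List.mem_singleton] at ha
          subst ha
          exact lamO_pos' 1
        set sing : ds (lamO 1 C) := ⟨[0], by simp [List.Chain'], hsing⟩ with hsingdef
        have hone : ∀ η : ds (1 : Ordinal.{u}), η.1 = [] ∨ η.1 = [0] := by
          rintro ⟨l, hch, hlt⟩
          rcases l with _ | ⟨a, t⟩
          · exact Or.inl rfl
          · have ha : a = 0 := Ordinal.lt_one_iff_zero.mp (hlt a (by simp))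
            subst ha
            rcases t with _ | ⟨b, t'⟩
            · exact Or.inr rfl
            · exfalso
              have hb : (0 : Ordinal.{u}) > b := (List.isChain_cons_cons.mp hch).1
              exact absurd hb (by simp [not_lt_zero])
        refine ⟨fun η => if h : η.1 = [] then dsNil _ else sing, fun _ => F sing,
          fun η => ?_, fun η₁ η₂ => ?_, fun η n hn => ?_⟩
        · dsimp only
          rcases hone η with h | h
          · erw [dif_pos h, h]; rfl
          · erw [dif_neg (by rw [h]; simp), h]
        · dsimp only
          rcases hone η₁ with u1 | u1 <;> rcases hone η₂ with u2 | u2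
          · erw [dif_pos u1, dif_pos u2, u1, u2]
            exact iff_of_true (List.prefix_refl _) (List.prefix_refl _)
          · erw [dif_pos u1, dif_neg (by rw [u2]; simp), u1, u2]
            exact iff_of_true List.nil_prefix List.nil_prefix
          · erw [dif_neg (by rw [u1]; simp), dif_pos u2, u1, u2]
            refine iff_of_false (by simp) (by simp [dsNil])
          · erw [dif_neg (by rw [u1]; simp), dif_neg (by rw [u2]; simp), u1, u2]
        · dsimp only
          rcases hone η with h | h
          · rw [h] at hn; simp at hn
          · erw [dif_neg (by rw [h]; simp)]
    · -- main case
      have h2αc : 2 ≤ α.card := by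
        have := Ordinal.card_le_card h2α
        rwa [Ordinal.card_ofNat] at this
      exact main_case α F h2αc h2C
end
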